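/- Let Γ be a valued structure with finite relational signature τ, countable domain C, and oligomorphic automorphism group. Then for every τ-expression φ(x_1,…,x_n) there exists a ∈ C^n such that φ^Γ(a) = inf_{b ∈ C^n} φ^Γ(b); in particular, the cost of φ with respect to Γ is attained. -/

import Mathlib

open MeasureTheory
open scoped ENNReal NNReal

/-- The value space `ℚ ∪ {∞}`. -/
abbrev QInf : Type := WithTop ℚ

/-- The embedding of `ℚ ∪ {∞}` into the extended reals. -/
noncomputable def QInf.toE (x : QInf) : EReal :=
  WithTop.recTopCoe ⊤ (fun q : ℚ => ((q : ℝ) : EReal)) x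

/-- A relational signature: a collection of relation symbols with arities. -/
structure Signature where
  symbols : Type
  arity : symbols → ℕ

/-- A valued `τ`-structure with domain `C`: each symbol is interpreted as a valued relation. -/
def VStruct (τ : Signature) (C : Type) : Type :=
  ∀ s : τ.symbols, (Fin (τ.arity s) → C) → QInf

/-- An atom `R(x_{i_1},…,x_{i_k})` with variables from `V`. -/
structure SAtom (τ : Signature) (V : Type) where
  sym : τ.symbols
  vars : Fin (τ.arity sym) → V

/-- A `τ`-expression: a finite formal sum of atoms. -/
def Expr (τ : Signature) (V : Type) : Type := List (SAtom τ V)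

/-- Evaluation of a `τ`-expression in a valued structure. -/
def Expr.eval {τ : Signature} {C V : Type} (Γ : VStruct τ C) (φ : Expr τ V)
    (a : V → C) : QInf :=
  (φ.map fun t => Γ t.sym fun i => a (t.vars i)).sum

/-- The product topology on `D → C` where `C` carries the discrete topology. -/
def fnTop (D C : Type) : TopologicalSpace (D → C) :=
  @Pi.topologicalSpace D (fun _ => C) (fun _ => ⊥)

/-- The Borel σ-algebra on `D → C` for the product of discrete topologies. -/
noncomputable def fnBorel (D C : Type) : MeasurableSpace (D → C) :=
  @borel (D → C) (fnTop D C)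

/-- A fractional map from `D` to `C`: a Borel probability measure on `C^D`. -/
def IsFracMap {D C : Type} (ω : @Measure (D → C) (fnBorel D C)) : Prop :=
  @IsProbabilityMeasure (D → C) (fnBorel D C) ω

/-- The positive part of an extended real, as an extended nonnegative real. -/
noncomputable def erealPos (x : EReal) : ℝ≥0∞ :=
  if x = ⊤ then ⊤ else ENNReal.ofReal x.toReal

/-- The `EReal`-valued Lebesgue integral: integral of the positive part minus
integral of the negative part. -/
noncomputable def EInt' {D C : Type} (ω : @Measure (D → C) (fnBorel D C))
    (X : (D → C) → EReal) : EReal :=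
  ((@MeasureTheory.lintegral (D → C) (fnBorel D C) ω fun f => erealPos (X f) : ℝ≥0∞) : EReal)
    - ((@MeasureTheory.lintegral (D → C) (fnBorel D C) ω fun f => erealPos (-X f) : ℝ≥0∞) : EReal)

/-- Existence of the `EReal`-valued Lebesgue integral: the integrand is Borel measurable and
not both the positive and the negative part have infinite integral. -/
def EIntEx {D C : Type} (ω : @Measure (D → C) (fnBorel D C)) (X : (D → C) → EReal) : Prop :=
  (@Measurable (D → C) EReal (fnBorel D C) inferInstance X) ∧
    ((@MeasureTheory.lintegral (D → C) (fnBorel D C) ω fun f => erealPos (X f)) ≠ ⊤ ∨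
      (@MeasureTheory.lintegral (D → C) (fnBorel D C) ω fun f => erealPos (-X f)) ≠ ⊤)

/-- A fractional homomorphism from `Δ` to `Γ`. -/
def IsFracHom {τ : Signature} {D C : Type} (Δ : VStruct τ D) (Γ : VStruct τ C)
    (ω : @Measure (D → C) (fnBorel D C)) : Prop :=
  IsFracMap ω ∧
    ∀ (s : τ.symbols) (a : Fin (τ.arity s) → D),
      EIntEx ω (fun f => QInf.toE (Γ s (f ∘ a))) ∧
        EInt' ω (fun f => QInf.toE (Γ s (f ∘ a))) ≤ QInf.toE (Δ s a)

/-- An automorphism of a valued structure. -/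
def IsVAuto {τ : Signature} {C : Type} (Γ : VStruct τ C) (α : Equiv.Perm C) : Prop :=
  ∀ (s : τ.symbols) (a : Fin (τ.arity s) → C), Γ s (fun i => α (a i)) = Γ s a

/-- The automorphism group of a valued structure is oligomorphic: for each `k` there are
finitely many orbits of `k`-tuples. -/
def VOligo {τ : Signature} {C : Type} (Γ : VStruct τ C) : Prop :=
  ∀ k : ℕ, ∃ F : Set (Fin k → C), F.Finite ∧
    ∀ a : Fin k → C, ∃ b ∈ F, ∃ α : Equiv.Perm C,
      IsVAuto Γ α ∧ (fun i => α (b i)) = a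

/-! Finitely many orbits of `n`-tuples give an expression only finitely many values, and a
finite nonempty set of extended reals contains its infimum. -/

theorem Expr.eval_apply_of_isVAuto {τ : Signature} {C V : Type} (Γ : VStruct τ C)
    (φ : Expr τ V) {α : Equiv.Perm C} (hα : IsVAuto Γ α) (a : V → C) :
    Expr.eval Γ φ (fun v => α (a v)) = Expr.eval Γ φ a := by
  unfold Expr.eval
  congr 1
  exact List.map_congr_left fun t _ => hα t.sym fun i => a (t.vars i)

theorem VOligo.finite_range_eval {τ : Signature} {C : Type} {Γ : VStruct τ C}
    (holig : VOligo Γ) {n : ℕ} (φ : Expr τ (Fin n)) :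
    (Set.range (Expr.eval Γ φ)).Finite := by
  obtain ⟨F, hF_finite, hF_orbits⟩ := holig n
  refine (hF_finite.image (Expr.eval Γ φ)).subset ?_
  rintro _ ⟨a, rfl⟩
  obtain ⟨b, hbF, α, hα, rfl⟩ := hF_orbits a
  exact ⟨b, hbF, (Expr.eval_apply_of_isVAuto Γ φ hα b).symm⟩

theorem cost_attained_general {τ : Signature} {C : Type} [Nonempty C]
    (Γ : VStruct τ C) (holig : VOligo Γ) {n : ℕ} (φ : Expr τ (Fin n)) :
    ∃ a : Fin n → C,
      QInf.toE (Expr.eval Γ φ a) = ⨅ b : Fin n → C, QInf.toE (Expr.eval Γ φ b) := by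
  have h_finite : (Set.range fun b => QInf.toE (Expr.eval Γ φ b)).Finite := by
    rw [Set.range_comp']
    exact (holig.finite_range_eval φ).image QInf.toE
  exact (Set.range_nonempty _).csInf_mem h_finite

/-- costs are attained: if `Γ` is a valued structure with a finite
signature, countable domain and oligomorphic automorphism group, then for every
`τ`-expression `φ(x_1,…,x_n)` there is a tuple `a` realizing the cost of `φ`. -/
theorem cost_attained {τ : Signature} [Finite τ.symbols] {C : Type}
    [Countable C] [Nonempty C]
    (Γ : VStruct τ C) (holig : VOligo Γ) {n : ℕ} (φ : Expr τ (Fin n)) :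
    ∃ a : Fin n → C,
      QInf.toE (Expr.eval Γ φ a) = ⨅ b : Fin n → C, QInf.toE (Expr.eval Γ φ b) :=
  cost_attained_general Γ holig φ
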